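/- Let S be a possibly disconnected surface with k connected components, total Euler genus g, and b boundary components in total, and consider sequences of essential cutting operations (cutting along non-contractible simple closed curves). Define the potential φ(S') = 2·(total Euler genus of S') − (number of connected components of S'). Then φ strictly decreases at each essential cutting operation, φ(S) = 2g − k, and for every surface S' obtainable from S by essential cutting operations, φ(S') ≥ −(k + g + b). Consequently, every sequence of essential cutting operations starting from S has length at most 3g + b. -/

import Mathlib

/-- A connected component of a possibly disconnected surface with boundary, recorded
(following the classification of surfaces) by its Euler genus and its number of
boundary components. -/
structure SurfComp where
  genus : ℕ
  boundary : ℕ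
deriving DecidableEq

/-- A possibly disconnected surface with boundary, up to homeomorphism. -/
abbrev BSurf := Multiset SurfComp

/-- Total Euler genus. -/
def totGenus (S : BSurf) : ℕ := (S.map SurfComp.genus).sum

/-- Total number of boundary components. -/
def totBoundary (S : BSurf) : ℕ := (S.map SurfComp.boundary).sum

/-- Number of connected components. -/
def nComp (S : BSurf) : ℕ := Multiset.card S

/-- An essential cutting operation (cutting along a non-contractible simple closed
curve in the interior and attaching disks to the new boundary circles): either it
reduces the Euler genus of one component by 1 or 2, keeping the number of components,
or it splits one component into two components whose genera sum to that of the original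
and whose boundary components are partitioned among them, each new component having
positive genus or containing a boundary component. -/
def EssCut (S S' : BSurf) : Prop :=
  (∃ C ∈ S, ∃ d : ℕ, (d = 1 ∨ d = 2) ∧ d ≤ C.genus ∧
      S' = (S.erase C) + {⟨C.genus - d, C.boundary⟩})
  ∨ (∃ C ∈ S, ∃ C₁ C₂ : SurfComp, C₁.genus + C₂.genus = C.genus ∧
      C₁.boundary + C₂.boundary = C.boundary ∧
      (0 < C₁.genus ∨ 0 < C₁.boundary) ∧ (0 < C₂.genus ∨ 0 < C₂.boundary) ∧
      S' = (S.erase C) + {C₁, C₂})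

/-- The potential `φ(S) = 2·(total genus) − (number of components)`. -/
def potential (S : BSurf) : ℤ := 2 * (totGenus S : ℤ) - (nComp S : ℤ)

/-!
Each essential cut either lowers the total genus by at least one, or adds a component
without changing the genus, so `φ = 2g − k` drops by at least one. For a lower bound
on `φ`, note that the boundary count never changes and that `#spheres + genus` never
increases: a split creates no sphere, and a genus reduction that creates a sphere
lowers the genus. Every component that is not a sphere has genus or boundary, so any
reachable surface has at most `#spheres + g + b ≤ k + g + b` components, whence
`φ ≥ −(k + g + b)`. Comparing with the starting value `2g − k` bounds the number of
cuts by `3g + b`.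
-/

def IsSphere (C : SurfComp) : Prop := C.genus = 0 ∧ C.boundary = 0

instance : DecidablePred IsSphere := fun _ => instDecidableAnd

lemma not_isSphere_iff {C : SurfComp} : ¬IsSphere C ↔ 0 < C.genus ∨ 0 < C.boundary := by
  simp only [IsSphere]
  omega

def nSphere (S : BSurf) : ℕ := S.countP IsSphere

@[simp] lemma totGenus_cons (C : SurfComp) (S : BSurf) :
    totGenus (C ::ₘ S) = C.genus + totGenus S := by simp [totGenus]

@[simp] lemma totBoundary_cons (C : SurfComp) (S : BSurf) :
    totBoundary (C ::ₘ S) = C.boundary + totBoundary S := by simp [totBoundary]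

@[simp] lemma nComp_cons (C : SurfComp) (S : BSurf) :
    nComp (C ::ₘ S) = nComp S + 1 := by simp [nComp]

@[simp] lemma nSphere_cons (C : SurfComp) (S : BSurf) :
    nSphere (C ::ₘ S) = nSphere S + if IsSphere C then 1 else 0 :=
  Multiset.countP_cons _ _ _

lemma nSphere_le_nComp (S : BSurf) : nSphere S ≤ nComp S :=
  Multiset.countP_le_card _ _

lemma nComp_le_nSphere_add_totGenus_add_totBoundary (S : BSurf) :
    nComp S ≤ nSphere S + totGenus S + totBoundary S := by
  induction S using Multiset.induction with
  | empty => simp [nComp]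
  | cons C S ih =>
    simp only [nComp_cons, nSphere_cons, totGenus_cons, totBoundary_cons]
    split_ifs with hC
    · omega
    · have := not_isSphere_iff.1 hC
      omega

namespace EssCut

variable {T T' : BSurf}

lemma exists_cons (h : EssCut T T') :
    ∃ C R, T = C ::ₘ R ∧
      ((∃ d : ℕ, (d = 1 ∨ d = 2) ∧ d ≤ C.genus ∧ T' = ⟨C.genus - d, C.boundary⟩ ::ₘ R) ∨
       (∃ C₁ C₂ : SurfComp, C₁.genus + C₂.genus = C.genus ∧
          C₁.boundary + C₂.boundary = C.boundary ∧
          ¬IsSphere C₁ ∧ ¬IsSphere C₂ ∧ T' = C₁ ::ₘ C₂ ::ₘ R)) := by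
  rcases h with ⟨C, hC, d, hd, hdg, rfl⟩ | ⟨C, hC, C₁, C₂, hg, hb, h₁, h₂, rfl⟩
  · refine ⟨C, T.erase C, (Multiset.cons_erase hC).symm, .inl ⟨d, hd, hdg, ?_⟩⟩
    rw [add_comm, Multiset.singleton_add]
  · refine ⟨C, T.erase C, (Multiset.cons_erase hC).symm,
      .inr ⟨C₁, C₂, hg, hb, not_isSphere_iff.2 h₁, not_isSphere_iff.2 h₂, ?_⟩⟩
    rw [add_comm, Multiset.insert_eq_cons, Multiset.cons_add, Multiset.singleton_add]

lemma potential_lt (h : EssCut T T') : potential T' < potential T := by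
  obtain ⟨C, R, rfl, ⟨d, hd, hdg, rfl⟩ | ⟨C₁, C₂, hg, -, -, -, rfl⟩⟩ := h.exists_cons <;>
  · simp only [potential, totGenus_cons, nComp_cons]
    omega

lemma totBoundary_eq (h : EssCut T T') : totBoundary T' = totBoundary T := by
  obtain ⟨C, R, rfl, ⟨d, -, -, rfl⟩ | ⟨C₁, C₂, -, hb, -, -, rfl⟩⟩ := h.exists_cons
  · simp only [totBoundary_cons]
  · simp only [totBoundary_cons]
    omega

lemma nSphere_add_totGenus_le (h : EssCut T T') :
    nSphere T' + totGenus T' ≤ nSphere T + totGenus T := by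
  obtain ⟨C, R, rfl, ⟨d, hd, hdg, rfl⟩ | ⟨C₁, C₂, hg, -, h₁, h₂, rfl⟩⟩ := h.exists_cons
  · simp only [nSphere_cons, totGenus_cons]
    split_ifs <;> omega
  · simp only [nSphere_cons, totGenus_cons, if_neg h₁, if_neg h₂]
    split_ifs <;> omega

end EssCut

section Reachable

variable {S T : BSurf}

lemma totBoundary_eq_of_reflTransGen (h : Relation.ReflTransGen EssCut S T) :
    totBoundary T = totBoundary S := by
  induction h with
  | refl => rfl
  | tail _ hcut ih => rw [hcut.totBoundary_eq, ih]

lemma nSphere_add_totGenus_le_of_reflTransGen (h : Relation.ReflTransGen EssCut S T) :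
    nSphere T + totGenus T ≤ nSphere S + totGenus S := by
  induction h with
  | refl => rfl
  | tail _ hcut ih => exact hcut.nSphere_add_totGenus_le.trans ih

lemma nComp_le_of_reflTransGen (h : Relation.ReflTransGen EssCut S T) :
    nComp T ≤ nComp S + totGenus S + totBoundary S := by
  have hT := nComp_le_nSphere_add_totGenus_add_totBoundary T
  have hS := nSphere_le_nComp S
  have := nSphere_add_totGenus_le_of_reflTransGen h
  rw [totBoundary_eq_of_reflTransGen h] at hT
  omega

lemma neg_le_potential_of_reflTransGen (h : Relation.ReflTransGen EssCut S T) :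
    -((nComp S : ℤ) + totGenus S + totBoundary S) ≤ potential T := by
  have := nComp_le_of_reflTransGen h
  simp only [potential]
  omega

end Reachable

section Chain

variable {α : Type*} {r : α → α → Prop} {m : ℕ} {L : ℕ → α}

lemma Relation.reflTransGen_of_chain (hL : ∀ i < m, r (L i) (L (i + 1))) :
    Relation.ReflTransGen r (L 0) (L m) := by
  induction m with
  | zero => rfl
  | succ n ih => exact (ih fun i hi => hL i (by omega)).tail (hL n (by omega))

lemma add_le_of_chain_of_strictAnti (f : α → ℤ) (hf : ∀ a b, r a b → f b < f a)
    (hL : ∀ i < m, r (L i) (L (i + 1))) : f (L m) + m ≤ f (L 0) := by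
  induction m with
  | zero => simp
  | succ n ih =>
    have := hf _ _ (hL n (by omega))
    have := ih fun i hi => hL i (by omega)
    push_cast
    omega

end Chain

/-- the potential `φ = 2·(total genus) − (number of components)` strictly
decreases at each essential cutting operation, `φ(S) = 2g − k`, every surface `S'`
obtainable from `S` by essential cutting operations satisfies `φ(S') ≥ −(k + g + b)`,
and consequently every sequence of essential cutting operations starting from `S` has
length at most `3g + b`. -/
theorem essCut_potential (S : BSurf) (k g b : ℕ)
    (hk : nComp S = k) (hg : totGenus S = g) (hb : totBoundary S = b) :
    (∀ T T' : BSurf, EssCut T T' → potential T' < potential T) ∧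
    (potential S = 2 * (g : ℤ) - (k : ℤ)) ∧
    (∀ T : BSurf, Relation.ReflTransGen EssCut S T →
      -((k : ℤ) + (g : ℤ) + (b : ℤ)) ≤ potential T) ∧
    (∀ (m : ℕ) (L : ℕ → BSurf), L 0 = S →
      (∀ i < m, EssCut (L i) (L (i + 1))) → m ≤ 3 * g + b) := by
  subst hk hg hb
  have hS : potential S = 2 * (totGenus S : ℤ) - nComp S := rfl
  refine ⟨fun _ _ h => h.potential_lt, hS,
    fun _ h => neg_le_potential_of_reflTransGen h, ?_⟩
  intro m L hL0 hL
  have hdrop := add_le_of_chain_of_strictAnti potential (fun _ _ h => h.potential_lt) hL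
  have hbound := neg_le_potential_of_reflTransGen (hL0 ▸ Relation.reflTransGen_of_chain hL)
  rw [hL0, hS] at hdrop
  omega
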